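/- Fix S ∈ A(s) and let S‡ := Φ(S). Define γ_S := n^{−1/2}(I − P_{X_S})μ* and γ_{S‡} := n^{−1/2}(I − P_{X_{S‡}})μ*. Then: (i) ‖γ_S − γ_{S‡}‖₂ ≤ n^{−1/2}(‖P_{S‡|S}μ*‖₂ + ‖P_{S|S‡}μ*‖₂); (ii) ‖γ_S‖₂² − ‖γ_{S‡}‖₂² = n^{−1}(‖P_{S‡|S}μ*‖₂ + ‖P_{S|S‡}μ*‖₂)(‖P_{S‡|S}μ*‖₂ − ‖P_{S|S‡}μ*‖₂); and consequently, (iii) if ‖P_{S‡|S}μ*‖₂ ≥ ‖P_{S|S‡}μ*‖₂, then ‖γ_S‖₂² − ‖γ_{S‡}‖₂² ≥ ‖γ_S − γ_{S‡}‖₂ · n^{−1/2}(‖P_{S‡|S}μ*‖₂ − ‖P_{S|S‡}μ*‖₂). -/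

import Mathlib

open MeasureTheory ProbabilityTheory Real Finset
open scoped NNReal ENNReal

noncomputable section

namespace Paper

/-- The `j`-th column of `X` as a vector in Euclidean space. -/
def col {n p : ℕ} (X : Matrix (Fin n) (Fin p) ℝ) (j : Fin p) : EuclideanSpace ℝ (Fin n) :=
  WithLp.toLp 2 (fun i => X i j)

/-- Column space of the submatrix `X_S`. -/
def colSpan {n p : ℕ} (X : Matrix (Fin n) (Fin p) ℝ) (S : Finset (Fin p)) :
    Submodule ℝ (EuclideanSpace ℝ (Fin n)) :=
  Submodule.span ℝ (col X '' (S : Set (Fin p)))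

/-- Orthogonal projection of `ℝ^n` onto the column space of `X_S`. -/
def proj {n p : ℕ} (X : Matrix (Fin n) (Fin p) ℝ) (S : Finset (Fin p))
    (v : EuclideanSpace ℝ (Fin n)) : EuclideanSpace ℝ (Fin n) :=
  (Submodule.orthogonalProjection (colSpan X S) v : EuclideanSpace ℝ (Fin n))

/-- The marginal projection operator `P_{S₁|S₂} = P_{X_{S₁}} - P_{X_{S₁ ∩ S₂}}`. -/
def margProj {n p : ℕ} (X : Matrix (Fin n) (Fin p) ℝ) (S₁ S₂ : Finset (Fin p))
    (v : EuclideanSpace ℝ (Fin n)) : EuclideanSpace ℝ (Fin n) :=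
  proj X S₁ v - proj X (S₁ ∩ S₂) v

/-- The true signal `μ* = X β*`. -/
def mu {n p : ℕ} (X : Matrix (Fin n) (Fin p) ℝ) (β : Fin p → ℝ) :
    EuclideanSpace ℝ (Fin n) :=
  WithLp.toLp 2 (fun i => ∑ j, X i j * β j)

/-- `A(s)`: size-`s` models containing at least one false variable. -/
def bigA {p : ℕ} (Sstar : Finset (Fin p)) (s : ℕ) : Set (Finset (Fin p)) :=
  {S | S.card = s ∧ (S \ Sstar).Nonempty}

/-- `A*(s)`: size-`s` models with no false variable. -/
def bigAstar {p : ℕ} (Sstar : Finset (Fin p)) (s : ℕ) : Set (Finset (Fin p)) :=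
  {S | S ⊆ Sstar ∧ S.card = s}

/-- `Φ` is an optimal feature swap at sparsity `s`. -/
def IsOptSwap {n p : ℕ} (X : Matrix (Fin n) (Fin p) ℝ) (β : Fin p → ℝ)
    (Sstar : Finset (Fin p)) (s : ℕ) (Φ : Finset (Fin p) → Finset (Fin p)) : Prop :=
  ∀ S ∈ bigA Sstar s, Φ S ∈ bigAstar Sstar s ∧ S ∩ Sstar ⊆ Φ S ∧
    ∀ T ∈ bigAstar Sstar s, S ∩ Sstar ⊆ T →
      ‖proj X T (mu X β)‖ ≤ ‖proj X (Φ S) (mu X β)‖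

/-- Projected signal margin `m(S)`. -/
def margin {n p : ℕ} (X : Matrix (Fin n) (Fin p) ℝ) (β : Fin p → ℝ)
    (Φ : Finset (Fin p) → Finset (Fin p)) (S : Finset (Fin p)) : ℝ :=
  (‖margProj X (Φ S) S (mu X β)‖ - ‖margProj X S (Φ S) (mu X β)‖) /
    Real.sqrt ((Φ S \ S).card)

/-- Minimum projected signal margin `m_*(s)`. -/
def minMargin {n p : ℕ} (X : Matrix (Fin n) (Fin p) ℝ) (β : Fin p → ℝ)
    (Sstar : Finset (Fin p)) (Φ : Finset (Fin p) → Finset (Fin p)) (s : ℕ) : ℝ :=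
  sInf (margin X β Φ '' bigA Sstar s)

/-- Residual sum of squares `L_S = yᵀ(I - P_{X_S})y`. -/
def lossL {n p : ℕ} (X : Matrix (Fin n) (Fin p) ℝ) (S : Finset (Fin p))
    (y : EuclideanSpace ℝ (Fin n)) : ℝ :=
  ‖y - proj X S y‖ ^ 2

/-- `L_* = min_{|S| = s} L_S`. -/
def lossStar {n p : ℕ} (X : Matrix (Fin n) (Fin p) ℝ) (s : ℕ)
    (y : EuclideanSpace ℝ (Fin n)) : ℝ :=
  sInf {l | ∃ S : Finset (Fin p), S.card = s ∧ l = lossL X S y}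

/-- The collection `𝕊(s, η)` of near best `s`-subsets, given a realization `y`. -/
def nearBest {n p : ℕ} (X : Matrix (Fin n) (Fin p) ℝ) (β : Fin p → ℝ)
    (Sstar : Finset (Fin p)) (Φ : Finset (Fin p) → Finset (Fin p)) (s : ℕ) (η : ℝ)
    (y : EuclideanSpace ℝ (Fin n)) : Set (Finset (Fin p)) :=
  {S | S.card = s ∧ lossL X S y ≤ lossStar X s y + η * (minMargin X β Sstar Φ s) ^ 2}

/-- False discovery proportion. -/
def fdp {p : ℕ} (Sstar S : Finset (Fin p)) : ℝ :=
  ((S \ Sstar).card : ℝ) / max (S.card : ℝ) 1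

/-- `γ_S = n^{-1/2} (I - P_{X_S}) μ*`. -/
def gammaV {n p : ℕ} (X : Matrix (Fin n) (Fin p) ℝ) (β : Fin p → ℝ)
    (S : Finset (Fin p)) : EuclideanSpace ℝ (Fin n) :=
  (Real.sqrt n)⁻¹ • (mu X β - proj X S (mu X β))

/-!
The common projection `P_{X_{S ∩ S‡}}` cancels from
`γ_S - γ_{S‡} = n^{-1/2}(P_{S‡|S}μ* - P_{S|S‡}μ*)`, giving (i) by the triangle inequality, and
Pythagoras for the nested column spaces of `S ∩ S‡ ⊆ S` and `S ∩ S‡ ⊆ S‡` turns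
`‖γ_S‖² - ‖γ_{S‡}‖²` into `n^{-1}(‖P_{S‡|S}μ*‖² - ‖P_{S|S‡}μ*‖²)`, which is (ii).
Multiplying (i) by the nonnegative factor of (iii) and comparing with (ii) gives (iii).
-/

section Projection

variable {𝕜 E : Type*} [RCLike 𝕜] [NormedAddCommGroup E] [InnerProductSpace 𝕜 E]

open Submodule

theorem _root_.Submodule.norm_sub_starProjection_sq (K : Submodule 𝕜 E)
    [K.HasOrthogonalProjection] (v : E) :
    ‖v - K.starProjection v‖ ^ 2 = ‖v‖ ^ 2 - ‖K.starProjection v‖ ^ 2 := by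
  rw [← starProjection_orthogonal_val, K.norm_sq_eq_add_norm_sq_starProjection v]
  ring

theorem _root_.Submodule.norm_starProjection_sq_of_le {U W : Submodule 𝕜 E}
    [U.HasOrthogonalProjection] [W.HasOrthogonalProjection] (h : W ≤ U) (v : E) :
    ‖U.starProjection v‖ ^ 2 =
      ‖U.starProjection v - W.starProjection v‖ ^ 2 + ‖W.starProjection v‖ ^ 2 := by
  have hWU : W.starProjection (U.starProjection v) = W.starProjection v :=
    congrArg (· v) (starProjection_comp_starProjection_of_le h)
  rw [← hWU, ← starProjection_orthogonal_val, add_comm]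
  exact norm_sq_eq_add_norm_sq_starProjection _ W

theorem _root_.Submodule.norm_sub_starProjection_sq_sub_norm_sub_starProjection_sq
    {U V W : Submodule 𝕜 E} [U.HasOrthogonalProjection] [V.HasOrthogonalProjection]
    [W.HasOrthogonalProjection] (hU : W ≤ U) (hV : W ≤ V) (v : E) :
    ‖v - V.starProjection v‖ ^ 2 - ‖v - U.starProjection v‖ ^ 2 =
      ‖U.starProjection v - W.starProjection v‖ ^ 2 -
        ‖V.starProjection v - W.starProjection v‖ ^ 2 := by
  rw [norm_sub_starProjection_sq, norm_sub_starProjection_sq, norm_starProjection_sq_of_le hU,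
    norm_starProjection_sq_of_le hV]
  ring

end Projection

section Residual

variable {n p : ℕ} (X : Matrix (Fin n) (Fin p) ℝ) (β : Fin p → ℝ)

theorem colSpan_mono {S T : Finset (Fin p)} (h : S ⊆ T) : colSpan X S ≤ colSpan X T :=
  Submodule.span_mono (Set.image_mono (Finset.coe_subset.2 h))

theorem gammaV_sub_gammaV (S T : Finset (Fin p)) :
    gammaV X β S - gammaV X β T =
      (Real.sqrt n)⁻¹ • (margProj X T S (mu X β) - margProj X S T (mu X β)) := by
  rw [gammaV, gammaV, ← smul_sub, margProj, margProj, Finset.inter_comm S T]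
  congr 1
  abel

theorem norm_gammaV_sub_gammaV_le (S T : Finset (Fin p)) :
    ‖gammaV X β S - gammaV X β T‖ ≤
      (Real.sqrt n)⁻¹ * (‖margProj X T S (mu X β)‖ + ‖margProj X S T (mu X β)‖) := by
  rw [gammaV_sub_gammaV, norm_smul, Real.norm_of_nonneg (by positivity)]
  gcongr
  exact norm_sub_le _ _

theorem norm_gammaV_sq_sub_norm_gammaV_sq (S T : Finset (Fin p)) :
    ‖gammaV X β S‖ ^ 2 - ‖gammaV X β T‖ ^ 2 =
      (n : ℝ)⁻¹ * (‖margProj X T S (mu X β)‖ ^ 2 - ‖margProj X S T (mu X β)‖ ^ 2) := by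
  have hsq (R : Finset (Fin p)) :
      ‖gammaV X β R‖ ^ 2 = (n : ℝ)⁻¹ * ‖mu X β - proj X R (mu X β)‖ ^ 2 := by
    rw [gammaV, norm_smul, mul_pow, Real.norm_of_nonneg (by positivity), inv_pow,
      Real.sq_sqrt n.cast_nonneg]
  rw [hsq, hsq, ← mul_sub, margProj, margProj, Finset.inter_comm S T]
  exact congrArg _ <| Submodule.norm_sub_starProjection_sq_sub_norm_sub_starProjection_sq
    (colSpan_mono X Finset.inter_subset_left) (colSpan_mono X Finset.inter_subset_right) _

end Residual

theorem gamma_identities_general {n p : ℕ} (X : Matrix (Fin n) (Fin p) ℝ)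
    (β : Fin p → ℝ)
    (Φ : Finset (Fin p) → Finset (Fin p)) (S : Finset (Fin p)) :
    (‖gammaV X β S - gammaV X β (Φ S)‖ ≤
      (Real.sqrt n)⁻¹ *
        (‖margProj X (Φ S) S (mu X β)‖ + ‖margProj X S (Φ S) (mu X β)‖)) ∧
    (‖gammaV X β S‖ ^ 2 - ‖gammaV X β (Φ S)‖ ^ 2 =
      (n : ℝ)⁻¹ *
        ((‖margProj X (Φ S) S (mu X β)‖ + ‖margProj X S (Φ S) (mu X β)‖) *
          (‖margProj X (Φ S) S (mu X β)‖ - ‖margProj X S (Φ S) (mu X β)‖))) ∧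
    (‖margProj X S (Φ S) (mu X β)‖ ≤ ‖margProj X (Φ S) S (mu X β)‖ →
      ‖gammaV X β S - gammaV X β (Φ S)‖ *
          ((Real.sqrt n)⁻¹ *
            (‖margProj X (Φ S) S (mu X β)‖ - ‖margProj X S (Φ S) (mu X β)‖)) ≤
        ‖gammaV X β S‖ ^ 2 - ‖gammaV X β (Φ S)‖ ^ 2) := by
  set a := ‖margProj X (Φ S) S (mu X β)‖
  set b := ‖margProj X S (Φ S) (mu X β)‖
  have hdiff := norm_gammaV_sub_gammaV_le X β S (Φ S)
  have hsq :
      ‖gammaV X β S‖ ^ 2 - ‖gammaV X β (Φ S)‖ ^ 2 = (n : ℝ)⁻¹ * ((a + b) * (a - b)) := by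
    rw [norm_gammaV_sq_sub_norm_gammaV_sq, sq_sub_sq]
  refine ⟨hdiff, hsq, fun hba => ?_⟩
  calc ‖gammaV X β S - gammaV X β (Φ S)‖ * ((Real.sqrt n)⁻¹ * (a - b))
      ≤ (Real.sqrt n)⁻¹ * (a + b) * ((Real.sqrt n)⁻¹ * (a - b)) := by
        gcongr
    _ = (n : ℝ)⁻¹ * ((a + b) * (a - b)) := by
        rw [mul_mul_mul_comm, ← mul_inv, Real.mul_self_sqrt n.cast_nonneg]
    _ = _ := hsq.symm

/-- Basic identities for the residual signals `γ_S` and `γ_{Φ(S)}`: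
(i) `‖γ_S - γ_{S‡}‖ ≤ n^{-1/2}(‖P_{S‡|S}μ*‖ + ‖P_{S|S‡}μ*‖)`;
(ii) `‖γ_S‖² - ‖γ_{S‡}‖² = n^{-1}(‖P_{S‡|S}μ*‖ + ‖P_{S|S‡}μ*‖)(‖P_{S‡|S}μ*‖ - ‖P_{S|S‡}μ*‖)`;
(iii) if `‖P_{S‡|S}μ*‖ ≥ ‖P_{S|S‡}μ*‖` then
`‖γ_S‖² - ‖γ_{S‡}‖² ≥ ‖γ_S - γ_{S‡}‖ · n^{-1/2}(‖P_{S‡|S}μ*‖ - ‖P_{S|S‡}μ*‖)`. -/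
theorem gamma_identities {n p : ℕ} (hn : 0 < n) (X : Matrix (Fin n) (Fin p) ℝ)
    (β : Fin p → ℝ) (Sstar : Finset (Fin p)) (s : ℕ)
    (Φ : Finset (Fin p) → Finset (Fin p)) (S : Finset (Fin p))
    (hsupp : ∀ j, j ∈ Sstar ↔ β j ≠ 0)
    (hΦ : IsOptSwap X β Sstar s Φ)
    (hS : S ∈ bigA Sstar s) :
    (‖gammaV X β S - gammaV X β (Φ S)‖ ≤
      (Real.sqrt n)⁻¹ *
        (‖margProj X (Φ S) S (mu X β)‖ + ‖margProj X S (Φ S) (mu X β)‖)) ∧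
    (‖gammaV X β S‖ ^ 2 - ‖gammaV X β (Φ S)‖ ^ 2 =
      (n : ℝ)⁻¹ *
        ((‖margProj X (Φ S) S (mu X β)‖ + ‖margProj X S (Φ S) (mu X β)‖) *
          (‖margProj X (Φ S) S (mu X β)‖ - ‖margProj X S (Φ S) (mu X β)‖))) ∧
    (‖margProj X S (Φ S) (mu X β)‖ ≤ ‖margProj X (Φ S) S (mu X β)‖ →
      ‖gammaV X β S - gammaV X β (Φ S)‖ *
          ((Real.sqrt n)⁻¹ *
            (‖margProj X (Φ S) S (mu X β)‖ - ‖margProj X S (Φ S) (mu X β)‖)) ≤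
        ‖gammaV X β S‖ ^ 2 - ‖gammaV X β (Φ S)‖ ^ 2) :=
  gamma_identities_general X β Φ S

end Paper
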